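/- arXiv:1105.2417 — 2 statements merged into one kernel-verified Lean document; each statement's English description precedes it below -/
import Mathlib

section
/- Every infinite subset A of a homogeneous tree T contains an infinite subset B such that every non-empty finite subset of B is a free subset of T. -/
/-- Strict prefix relation on lists: the tree order on `b^{<ℕ}`. -/
def PLt {β : Type*} (s t : List β) : Prop := s <+: t ∧ s ≠ t

/-- The level of a node `t` in the tree `T ⊆ b^{<ℕ}`: the number of its strict
predecessors (strict prefixes) lying in `T`. -/
noncomputable def lvl {β : Type*} (T : Set (List β)) (t : List β) : ℕ :=
  {s ∈ T | PLt s t}.ncard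

/-- `t` is an immediate successor of `s` in the tree `T`. -/
def ImmSuc {β : Type*} (T : Set (List β)) (s t : List β) : Prop :=
  s ∈ T ∧ t ∈ T ∧ PLt s t ∧ ¬∃ u ∈ T, PLt s u ∧ PLt u t

/-- `T` is uniquely rooted: it has a node below all of its nodes. -/
def UniquelyRooted {β : Type*} (T : Set (List β)) : Prop :=
  ∃ r ∈ T, ∀ t ∈ T, r <+: t

/-- `C` is a maximal chain of the tree `T`. -/
def MaxChainIn {β : Type*} (T C : Set (List β)) : Prop :=
  C ⊆ T ∧ (∀ s ∈ C, ∀ t ∈ C, s <+: t ∨ t <+: s) ∧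
    ∀ C', C ⊆ C' → C' ⊆ T → (∀ s ∈ C', ∀ t ∈ C', s <+: t ∨ t <+: s) → C' = C

/-- `T` is balanced with all maximal chains of cardinality `h`
(i.e. balanced and of height `h`). -/
def BalancedOfHeight {β : Type*} (T : Set (List β)) (h : ℕ) : Prop :=
  ∀ C, MaxChainIn T C → C.Finite ∧ C.ncard = h

/-- Every level of `S` is a subset of some level of `T`. -/
def LevelsAligned {β : Type*} (T S : Set (List β)) : Prop :=
  ∀ s ∈ S, ∀ s' ∈ S, lvl S s = lvl S s' → lvl T s = lvl T s'

/-- For every non-maximal node `s` of `S` and every immediate successor `t` of `s`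
in `T` there is a unique immediate successor `s'` of `s` in `S` with `t ≤ s'`. -/
def SuccCond {β : Type*} (T S : Set (List β)) : Prop :=
  ∀ s ∈ S, (∃ x ∈ S, PLt s x) → ∀ t, ImmSuc T s t → ∃! s', ImmSuc S s s' ∧ t <+: s'

/-- `S` is a strong subtree of `T` of (finite) height `h`. -/
def IsStrongSubtreeFin {β : Type*} (T S : Set (List β)) (h : ℕ) : Prop :=
  S ⊆ T ∧ S.Nonempty ∧ UniquelyRooted S ∧ BalancedOfHeight S h ∧
    LevelsAligned T S ∧ SuccCond T S

/-- `S` is a strong subtree of `T` of infinite height (uniquely rooted, balanced with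
all maximal chains infinite, levels of `S` inside levels of `T`, successor condition). -/
def IsStrongSubtreeInf {β : Type*} (T S : Set (List β)) : Prop :=
  S ⊆ T ∧ S.Nonempty ∧ UniquelyRooted S ∧ (∀ s ∈ S, ∃ x ∈ S, PLt s x) ∧
    LevelsAligned T S ∧ SuccCond T S

/-- `r` is the root of `S`. -/
def IsRoot {β : Type*} (S : Set (List β)) (r : List β) : Prop :=
  r ∈ S ∧ ∀ x ∈ S, r <+: x

/-- `v` is the immediate successor of `u` in `S` in direction `p`, i.e. the unique
immediate successor of `u` in `S` extending `u⌢p`. -/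
def DirSucc {β : Type*} (S : Set (List β)) (u : List β) (p : β) (v : List β) : Prop :=
  ImmSuc S u v ∧ (u ++ [p]) <+: v

/-- `w` is the infimum (longest common initial segment) of the set `G` of nodes. -/
def IsInfList {β : Type*} (G : Set (List β)) (w : List β) : Prop :=
  (∀ t ∈ G, w <+: t) ∧ ∀ v, (∀ t ∈ G, v <+: t) → v <+: w

open Classical in
/-- The infimum (longest common initial segment) of a set of nodes. -/
noncomputable def infNode {β : Type*} (G : Set (List β)) : List β :=
  if h : ∃ w, IsInfList G w then h.choose else []

/-- The families `Free_k(T)` of free subsets of `T`, defined recursively: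
`Free₁(T)` consists of singletons, `Free₂(T)` of doubletons, and
`F ∈ Free_{k+1}(T)` iff `F = {t} ∪ G` with `G ∈ Free_k(T)`, `t ∈ T` and
`ℓ(t) < ℓ(∧G)`. -/
inductive FreeK {b : ℕ} (T : Set (List (Fin b))) : ℕ → Finset (List (Fin b)) → Prop
  | single (t : List (Fin b)) (ht : t ∈ T) : FreeK T 1 {t}
  | pair (s t : List (Fin b)) (hs : s ∈ T) (ht : t ∈ T) (hst : s ≠ t) :
      FreeK T 2 {s, t}
  | step (k : ℕ) (hk : 2 ≤ k) (t : List (Fin b)) (ht : t ∈ T)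
      (G : Finset (List (Fin b))) (hG : FreeK T k G)
      (hlen : t.length < (infNode (G : Set (List (Fin b)))).length) :
      FreeK T (k + 1) (insert t G)

/-- `F` is a free subset of `T`. -/
def IsFreeSet {b : ℕ} (T : Set (List (Fin b))) (F : Finset (List (Fin b))) : Prop :=
  ∃ k, FreeK T k F

lemma take_prefix_take_aux {β : Type*} (l : List β) {m n : ℕ} (h : m ≤ n) :
    l.take m <+: l.take n := by
  have h1 : l.take m = (l.take n).take m := by rw [List.take_take, Nat.min_eq_left h]
  rw [h1]
  exact List.take_prefix _ _

lemma exists_isInfList {β : Type*} (G : Set (List β)) (t0 : List β) (ht0 : t0 ∈ G) :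
    ∃ w, IsInfList G w := by
  classical
  set P : ℕ → Prop := fun n => ∀ t ∈ G, t0.take n <+: t with hP
  have hP0 : P 0 := by intro t ht; simp
  set m := Nat.findGreatest P t0.length with hm
  have hPm : P m := Nat.findGreatest_spec (Nat.zero_le _) hP0
  refine ⟨t0.take m, hPm, ?_⟩
  intro v hv
  have hvt0 : v <+: t0 := hv t0 ht0
  have hvtake : v = t0.take v.length := by
    obtain ⟨r, rfl⟩ := hvt0
    simp
  have hvlen : v.length ≤ t0.length := hvt0.length_le
  have hPv : P v.length := by
    intro t ht
    rw [← hvtake]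
    exact hv t ht
  have hle : v.length ≤ m := Nat.le_findGreatest hvlen hPv
  rw [hvtake]
  exact take_prefix_take_aux t0 hle

lemma isInfList_infNode {β : Type*} {G : Set (List β)} (h : G.Nonempty) :
    IsInfList G (infNode G) := by
  obtain ⟨t0, ht0⟩ := h
  have hex := exists_isInfList G t0 ht0
  rw [infNode, dif_pos hex]
  exact hex.choose_spec

lemma freeK_nonempty {b : ℕ} {T : Set (List (Fin b))} {k : ℕ} {G : Finset (List (Fin b))}
    (h : FreeK T k G) : G.Nonempty := by
  induction h with
  | single t ht => exact ⟨t, by simp⟩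
  | pair s t hs ht hst => exact ⟨s, by simp⟩
  | step k hk t ht G hG hlen ih => exact ⟨t, by simp⟩

lemma freeK_card {b : ℕ} {T : Set (List (Fin b))} {k : ℕ} {G : Finset (List (Fin b))}
    (h : FreeK T k G) : G.card = k := by
  induction h with
  | single t ht => simp
  | pair s t hs ht hst =>
      rw [Finset.card_insert_of_notMem (by simpa using hst), Finset.card_singleton]
  | step k hk t ht G hG hlen ih =>
      have hGne : (G : Set (List (Fin b))).Nonempty := by
        obtain ⟨g, hg⟩ := freeK_nonempty hG
        exact ⟨g, hg⟩
      have hinf := isInfList_infNode hGne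
      have htG : t ∉ G := by
        intro htG
        have h1 : (infNode (G : Set (List (Fin b)))).length ≤ t.length :=
          (hinf.1 t htG).length_le
        omega
      rw [Finset.card_insert_of_notMem htG, ih]

theorem stmt16 (b : ℕ) (hb : 2 ≤ b)
    (T : Set (List (Fin b))) (hT : IsStrongSubtreeInf Set.univ T)
    (A : Set (List (Fin b))) (hA : A ⊆ T) (hAinf : A.Infinite) :
    ∃ B ⊆ A, B.Infinite ∧
      ∀ F : Finset (List (Fin b)), ↑F ⊆ B → F.Nonempty → IsFreeSet T F := by
  classical
  -- Step 1: a branch below infinitely many elements of A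
  have hbranch : ∀ w : List (Fin b), (A ∩ {a | w <+: a}).Infinite →
      ∃ p : Fin b, (A ∩ {a | (w ++ [p]) <+: a}).Infinite := by
    intro w hw
    by_contra hcon
    push_neg at hcon
    apply hw
    have hsub : (A ∩ {a | w <+: a}) ⊆
        {w} ∪ ⋃ p : Fin b, (A ∩ {a | (w ++ [p]) <+: a}) := by
      rintro a ⟨haA, hpre⟩
      obtain ⟨r, rfl⟩ := hpre
      cases r with
      | nil => left; simp
      | cons p r' =>
          right
          exact Set.mem_iUnion.2 ⟨p, haA, ⟨r', by simp⟩⟩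
    exact Set.Finite.subset ((Set.finite_singleton w).union
      (Set.finite_iUnion fun p => hcon p)) hsub
  choose f hf using hbranch
  have h0 : (A ∩ {a : List (Fin b) | [] <+: a}).Infinite := by
    have : (A ∩ {a : List (Fin b) | [] <+: a}) = A := by
      ext a; simp
    rw [this]; exact hAinf
  let X : ℕ → {w : List (Fin b) // (A ∩ {a | w <+: a}).Infinite} :=
    fun n => Nat.rec ⟨[], h0⟩ (fun _ p => ⟨p.1 ++ [f p.1 p.2], hf p.1 p.2⟩) n
  let x : ℕ → List (Fin b) := fun n => (X n).1
  have hxsucc : ∀ n, ∃ p, x (n + 1) = x n ++ [p] := fun n => ⟨_, rfl⟩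
  have hxlen : ∀ n, (x n).length = n := by
    intro n
    induction n with
    | zero => rfl
    | succ n ih =>
        obtain ⟨p, hp⟩ := hxsucc n
        simp [hp, ih]
  have hxmono : ∀ m n : ℕ, m ≤ n → x m <+: x n := by
    intro m n hmn
    induction hmn with
    | refl => exact List.prefix_refl _
    | @step k hk ih =>
        obtain ⟨p, hp⟩ := hxsucc k
        rw [hp]
        exact ih.trans (List.prefix_append _ _)
  -- Step 2: the sequence
  have hpick : ∀ m : ℕ, ∃ a, a ∈ A ∧ x (m + 1) <+: a := by
    intro m
    obtain ⟨a, haA, hap⟩ := (X (m + 1)).2.nonempty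
    exact ⟨a, haA, hap⟩
  choose g hgA hgp using hpick
  let tt : ℕ → List (Fin b) := fun n => Nat.rec (g 0) (fun _ prev => g prev.length) n
  have httA : ∀ n, tt n ∈ A := by
    intro n
    cases n with
    | zero => exact hgA 0
    | succ n => exact hgA _
  have http : ∀ n, x ((tt n).length + 1) <+: tt (n + 1) := fun n => hgp _
  have hlen_lt : ∀ n, (tt n).length < (tt (n + 1)).length := by
    intro n
    have h1 := (http n).length_le
    have h2 := hxlen ((tt n).length + 1)
    omega
  have hlen_sm : StrictMono fun n => (tt n).length := strictMono_nat_of_lt_succ hlen_lt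
  have hinj : Function.Injective tt := by
    intro m n h
    exact hlen_sm.injective (by simp [h])
  have key : ∀ i j : ℕ, i < j → x ((tt i).length + 1) <+: tt j := by
    intro i j hij
    obtain ⟨m, rfl⟩ : ∃ m, j = m + 1 := ⟨j - 1, by omega⟩
    have him : i ≤ m := by omega
    have h1 : (tt i).length + 1 ≤ (tt m).length + 1 := by
      have := hlen_sm.monotone him
      simpa using Nat.succ_le_succ this
    exact (hxmono _ _ h1).trans (http m)
  have hTA : ∀ n, tt n ∈ T := fun n => hA (httA n)
  have hBT : ∀ a ∈ Set.range tt, a ∈ T := by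
    rintro a ⟨n, rfl⟩
    exact hTA n
  refine ⟨Set.range tt, ?_, Set.infinite_range_of_injective hinj, ?_⟩
  · rintro a ⟨n, rfl⟩
    exact httA n
  -- Step 3: freeness
  have main : ∀ N : ℕ, ∀ F : Finset (List (Fin b)), F.card ≤ N →
      ↑F ⊆ Set.range tt → F.Nonempty → ∃ k, FreeK T k F := by
    intro N
    induction N with
    | zero =>
        intro F hc hs hne
        have := hne.card_pos
        omega
    | succ N ih =>
        intro F hc hs hne
        rcases Nat.lt_or_ge F.card 3 with hlt | hge
        · interval_cases h : F.card
          · exact absurd h (by have := hne.card_pos; omega)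
          · obtain ⟨a, rfl⟩ := Finset.card_eq_one.1 h
            exact ⟨1, .single a (hBT a (hs (by simp)))⟩
          · obtain ⟨a, c, hac, rfl⟩ := Finset.card_eq_two.1 h
            exact ⟨2, .pair a c (hBT a (hs (by simp))) (hBT c (hs (by simp))) hac⟩
        · have hS : {i : ℕ | tt i ∈ F}.Nonempty := by
            obtain ⟨a, haF⟩ := hne
            obtain ⟨i, rfl⟩ := hs haF
            exact ⟨i, haF⟩
          set i0 := sInf {i : ℕ | tt i ∈ F} with hi0def
          have hi0F : tt i0 ∈ F := Nat.sInf_mem hS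
          have hi0min : ∀ j, tt j ∈ F → i0 ≤ j := fun j hj => Nat.sInf_le hj
          set G := F.erase (tt i0) with hGdef
          have hGcard : G.card = F.card - 1 := Finset.card_erase_of_mem hi0F
          have hGsub : ↑G ⊆ Set.range tt := fun a ha =>
            hs (Finset.erase_subset _ _ (by exact_mod_cast ha))
          have hGne : G.Nonempty := Finset.card_pos.1 (by omega)
          obtain ⟨k, hk⟩ := ih G (by omega) hGsub hGne
          have hkcard : G.card = k := freeK_card hk
          have hpre : ∀ a ∈ (G : Set (List (Fin b))), x ((tt i0).length + 1) <+: a := by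
            intro a haG
            obtain ⟨j, rfl⟩ := hGsub haG
            have haG' : tt j ∈ G := by exact_mod_cast haG
            have hjF : tt j ∈ F := Finset.mem_of_mem_erase haG'
            have hne' : tt j ≠ tt i0 := Finset.ne_of_mem_erase haG'
            have hji : j ≠ i0 := fun h => hne' (by rw [h])
            have : i0 < j := lt_of_le_of_ne (hi0min j hjF) (Ne.symm hji)
            exact key i0 j this
          have hGsetne : (G : Set (List (Fin b))).Nonempty := by
            obtain ⟨a, ha⟩ := hGne
            exact ⟨a, ha⟩
          have hinf := isInfList_infNode hGsetne
          have hxinf : x ((tt i0).length + 1) <+: infNode (G : Set (List (Fin b))) :=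
            hinf.2 _ hpre
          have hlen2 : (tt i0).length < (infNode (G : Set (List (Fin b)))).length := by
            have h1 := hxinf.length_le
            have h2 := hxlen ((tt i0).length + 1)
            omega
          have hstep := FreeK.step k (by omega) (tt i0) (hTA i0) G hk hlen2
          rw [Finset.insert_erase hi0F] at hstep
          exact ⟨k + 1, hstep⟩
  intro F hs hne
  exact main F.card F le_rfl hs hne
end

section
/- Let T be a homogeneous tree with branching number b. Every doubleton {s,t} ⊆ T with s ≠ t belongs to one of the following three classes: (I) there exist a strong subtree F of T of height 3 and p ∈ {0,…,b−1} with {s,t} = {F(0), F(0)⌢_F p}; (II) there exist such F and p ≠ q with {s,t} = {F(0)⌢_F p, F(0)⌢_F q}; (III) there exist such F, p ≠ q and r with {s,t} = {F(0)⌢_F p, (F(0)⌢_F q)⌢_F r}. -/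
/-!
Every configuration is realised inside one kind of strong subtree of height 3: a root `r`, one
node `v p` above each child `r ⌢ p` at a common level of `T`, and one node `w p q` above each
`v p ⌢ q` at a higher common level of `T`. Such a tree is strong as soon as the nodes lie in the
prescribed directions at the prescribed levels, and the nodes that are not prescribed can be
chosen freely, since `T` has infinite height. If `s < t`, take `r = s` and `v p = t`. Otherwise
let `r = s ∧ t`; then `s` and `t` leave `r` in different directions `p ≠ q`. If `s` and `t` have
the same level, prescribe `v p = s` and `v q = t`; if `s` is lower, let `v q` be the predecessor of
`t` at the level of `s` and prescribe `w q _ = t`.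
-/

variable {β : Type*}

section PrefixOrder

variable {a u x y : List β} {p q : β}

theorem plt_of_prefix_of_length_lt (h : a <+: x) (hl : a.length < x.length) : PLt a x :=
  ⟨h, by rintro rfl; exact lt_irrefl _ hl⟩

theorem PLt.length_lt (h : PLt a x) : a.length < x.length :=
  lt_of_le_of_ne h.1.length_le fun e => h.2 (h.1.eq_of_length e)

theorem PLt.irrefl (a : List β) : ¬PLt a a := fun h => h.2 rfl

theorem PLt.trans_prefix (h₁ : PLt a u) (h₂ : u <+: x) : PLt a x :=
  plt_of_prefix_of_length_lt (h₁.1.trans h₂) (h₁.length_lt.trans_le h₂.length_le)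

theorem PLt.trans (h₁ : PLt a u) (h₂ : PLt u x) : PLt a x := h₁.trans_prefix h₂.1

theorem plt_of_append_singleton_prefix (h : u ++ [p] <+: x) : PLt u x :=
  plt_of_prefix_of_length_lt ((List.prefix_append u [p]).trans h)
    (by simpa using h.length_le)

theorem PLt.exists_append_singleton_prefix (h : PLt u x) : ∃ p, u ++ [p] <+: x := by
  obtain ⟨_ | ⟨p, rest⟩, rfl⟩ := h.1
  · exact absurd (List.append_nil u).symm h.2
  · exact ⟨p, rest, by simp⟩

theorem eq_of_append_singleton_prefix (hp : u ++ [p] <+: x) (hq : u ++ [q] <+: x) : p = q := by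
  have : u ++ [p] = u ++ [q] := by
    rcases List.prefix_or_prefix_of_prefix hp hq with h | h
    exacts [h.eq_of_length (by simp), (h.eq_of_length (by simp)).symm]
  simpa using this

theorem append_singleton_prefix_of_prefix (hp : u ++ [p] <+: x) (hy : y <+: x) (hu : PLt u y) :
    u ++ [p] <+: y := by
  rcases List.prefix_or_prefix_of_prefix hp hy with h | h
  · exact h
  · rw [h.eq_of_length (le_antisymm h.length_le (by simpa using hu.length_lt))]

end PrefixOrder

section Level

variable {T : Set (List β)} {u x z : List β}

theorem finite_setOf_plt (T : Set (List β)) (x : List β) : {y ∈ T | PLt y x}.Finite :=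
  x.inits.finite_toSet.subset fun y hy => (List.mem_inits y x).2 hy.2.1

theorem ncard_insert_setOf_plt (T : Set (List β)) (u : List β) :
    (insert u {y ∈ T | PLt y u}).ncard = lvl T u + 1 :=
  Set.ncard_insert_of_notMem (fun h => PLt.irrefl u h.2) (finite_setOf_plt T u)

theorem lvl_lt_lvl_of_plt (hu : u ∈ T) (h : PLt u x) : lvl T u < lvl T x := by
  rw [Nat.lt_iff_add_one_le, ← ncard_insert_setOf_plt]
  refine Set.ncard_le_ncard ?_ (finite_setOf_plt T x)
  rintro y (rfl | hy)
  exacts [⟨hu, h⟩, ⟨hy.1, hy.2.trans h⟩]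

theorem eq_of_prefix_of_lvl_eq (hu : u ∈ T) (h : u <+: x) (hl : lvl T u = lvl T x) : u = x :=
  by_contra fun hne => (lvl_lt_lvl_of_plt hu ⟨h, hne⟩).ne hl

theorem ImmSuc.lvl_eq (h : ImmSuc T u z) : lvl T z = lvl T u + 1 := by
  obtain ⟨hu, -, huz, hno⟩ := h
  rw [← ncard_insert_setOf_plt, lvl]
  congr 1
  ext y
  refine ⟨fun ⟨hy, hyz⟩ => ?_, ?_⟩
  · rcases List.prefix_or_prefix_of_prefix hyz.1 huz.1 with hyu | huy
    · rcases eq_or_ne y u with rfl | hne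
      exacts [Set.mem_insert _ _, Set.mem_insert_of_mem _ ⟨hy, hyu, hne⟩]
    · rcases eq_or_ne u y with rfl | hne
      exacts [Set.mem_insert _ _, absurd ⟨y, hy, ⟨huy, hne⟩, hyz⟩ hno]
  · rintro (rfl | ⟨hy, hyu⟩)
    exacts [⟨hu, huz⟩, ⟨hy, hyu.trans huz⟩]

theorem exists_immSuc_prefix (hu : u ∈ T) (hx : x ∈ T) (h : PLt u x) :
    ∃ z, ImmSuc T u z ∧ z <+: x := by
  have hfin : {m ∈ T | PLt u m ∧ m <+: x}.Finite :=
    x.inits.finite_toSet.subset fun m hm => (List.mem_inits m x).2 hm.2.2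
  obtain ⟨z, ⟨hz, huz, hzx⟩, hmin⟩ :=
    hfin.exists_minimalFor List.length _ ⟨x, hx, h, List.prefix_rfl⟩
  refine ⟨z, ⟨hu, hz, huz, ?_⟩, hzx⟩
  rintro ⟨m, hm, hum, hmz⟩
  exact absurd (hmin ⟨hm, hum, hmz.1.trans hzx⟩ hmz.length_lt.le) (not_le.2 hmz.length_lt)

theorem exists_prefix_lvl_eq (hu : u ∈ T) (hx : x ∈ T) (hux : u <+: x) {ℓ : ℕ}
    (h₁ : lvl T u ≤ ℓ) (h₂ : ℓ ≤ lvl T x) : ∃ y ∈ T, u <+: y ∧ y <+: x ∧ lvl T y = ℓ := by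
  induction ℓ, h₁ using Nat.le_induction with
  | base => exact ⟨u, hu, List.prefix_rfl, hux, rfl⟩
  | succ ℓ _ ih =>
    obtain ⟨y, hy, huy, hyx, rfl⟩ := ih (by omega)
    have hyx' : PLt y x := ⟨hyx, by rintro rfl; omega⟩
    obtain ⟨z, hz, hzx⟩ := exists_immSuc_prefix hy hx hyx'
    exact ⟨z, hz.2.1, huy.trans hz.2.2.1.1, hzx, hz.lvl_eq⟩

end Level

def IsNodeAt (T : Set (List β)) (ℓ : ℕ) (u : List β) (p : β) (x : List β) : Prop :=
  x ∈ T ∧ u ++ [p] <+: x ∧ lvl T x = ℓ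

section StrongSubtree

variable {T : Set (List β)} (hT : IsStrongSubtreeInf Set.univ T) {u t x z : List β} {p : β}
include hT

theorem existsUnique_immSuc_dir (hu : u ∈ T) (p : β) :
    ∃! z, ImmSuc T u z ∧ u ++ [p] <+: z := by
  obtain ⟨-, -, -, hnonmax, -, hsucc⟩ := hT
  refine hsucc u hu (hnonmax u hu) (u ++ [p])
    ⟨trivial, trivial, plt_of_append_singleton_prefix List.prefix_rfl, ?_⟩
  rintro ⟨m, -, hum, hmu⟩
  have := hmu.length_lt
  rw [List.length_append, List.length_singleton] at this
  exact absurd hum.length_lt (by omega)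

theorem ImmSuc.prefix_of_dir (hu : u ∈ T) (hz : ImmSuc T u z) (hpz : u ++ [p] <+: z)
    (hx : x ∈ T) (hpx : u ++ [p] <+: x) : z <+: x := by
  obtain ⟨z', hz', hz'x⟩ := exists_immSuc_prefix hu hx (plt_of_append_singleton_prefix hpx)
  have hpz' := append_singleton_prefix_of_prefix hpx hz'x hz'.2.2.1
  obtain ⟨_, -, huniq⟩ := existsUnique_immSuc_dir hT hu p
  rwa [huniq z ⟨hz, hpz⟩, ← huniq z' ⟨hz', hpz'⟩]

theorem exists_isNodeAt (hu : u ∈ T) {ℓ : ℕ} (hℓ : lvl T u < ℓ) (p : β) :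
    ∃ x, IsNodeAt T ℓ u p x := by
  induction ℓ, hℓ using Nat.le_induction with
  | base =>
    obtain ⟨z, ⟨hz, hpz⟩, -⟩ := existsUnique_immSuc_dir hT hu p
    exact ⟨z, hz.2.1, hpz, hz.lvl_eq⟩
  | succ ℓ _ ih =>
    obtain ⟨x, hx, hpx, rfl⟩ := ih
    obtain ⟨z, ⟨hz, -⟩, -⟩ := existsUnique_immSuc_dir hT hx p
    exact ⟨z, hz.2.1, hpx.trans hz.2.2.1.1, hz.lvl_eq⟩

theorem existsUnique_immSuc_prefix_of_dir {S : Set (List β)} {f : β → List β} (hu : u ∈ T)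
    (hf : ∀ p, f p ∈ T ∧ u ++ [p] <+: f p) (hS : ∀ y, ImmSuc S u y ↔ ∃ p, y = f p)
    (ht : ImmSuc T u t) : ∃! s, ImmSuc S u s ∧ t <+: s := by
  obtain ⟨p, hpt⟩ := ht.2.2.1.exists_append_singleton_prefix
  refine ⟨f p, ⟨(hS _).2 ⟨p, rfl⟩, ht.prefix_of_dir hT hu hpt (hf p).1 (hf p).2⟩, ?_⟩
  rintro s ⟨hs, hts⟩
  obtain ⟨p', rfl⟩ := (hS s).1 hs
  rw [eq_of_append_singleton_prefix (hpt.trans hts) (hf p').2]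

theorem exists_meet {s t : List β} (hs : s ∈ T) (ht : t ∈ T) (hst : ¬s <+: t) (hts : ¬t <+: s) :
    ∃ r ∈ T, ∃ p q, p ≠ q ∧ r ++ [p] <+: s ∧ r ++ [q] <+: t := by
  obtain ⟨r₀, hr₀, hr₀le⟩ := hT.2.2.1
  have hfin : {x ∈ T | x <+: s ∧ x <+: t}.Finite :=
    s.inits.finite_toSet.subset fun x hx => (List.mem_inits x s).2 hx.2.1
  obtain ⟨r, ⟨hr, hrs, hrt⟩, hmax⟩ :=
    hfin.exists_maximalFor List.length _ ⟨r₀, hr₀, hr₀le s hs, hr₀le t ht⟩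
  have hrs' : PLt r s := ⟨hrs, by rintro rfl; exact hst hrt⟩
  have hrt' : PLt r t := ⟨hrt, by rintro rfl; exact hts hrs⟩
  obtain ⟨p, hp⟩ := hrs'.exists_append_singleton_prefix
  obtain ⟨q, hq⟩ := hrt'.exists_append_singleton_prefix
  refine ⟨r, hr, p, q, ?_, hp, hq⟩
  rintro rfl
  obtain ⟨z, hz, hzs⟩ := exists_immSuc_prefix hr hs hrs'
  have hpz := append_singleton_prefix_of_prefix hp hzs hz.2.2.1
  have hzt := hz.prefix_of_dir hT hr hpz ht hq
  exact absurd (hmax ⟨hz.2.1, hzs, hzt⟩ hz.2.2.1.length_lt.le) (not_le.2 hz.2.2.1.length_lt)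

end StrongSubtree

section Chain

variable {S C : Set (List β)} {x : List β}

theorem MaxChainIn.mem_of_forall_comparable (hC : MaxChainIn S C) (hx : x ∈ S)
    (h : ∀ c ∈ C, x <+: c ∨ c <+: x) : x ∈ C := by
  have hchain : ∀ a ∈ insert x C, ∀ c ∈ insert x C, a <+: c ∨ c <+: a := by
    rintro a (rfl | ha) c (rfl | hc)
    exacts [Or.inl List.prefix_rfl, h c hc, (h a ha).symm, hC.2.1 a ha c hc]
  rw [← hC.2.2 _ (Set.subset_insert x C) (Set.insert_subset hx hC.1) hchain]
  exact Set.mem_insert x C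

theorem MaxChainIn.eq_setOf_prefix (hC : MaxChainIn S C) (hx : x ∈ C)
    (hmax : ∀ y ∈ S, ¬PLt x y) : C = {y ∈ S | y <+: x} := by
  have hle : ∀ c ∈ C, c <+: x := by
    intro c hc
    rcases hC.2.1 c hc x hx with h | h
    · exact h
    · obtain rfl : x = c := by_contra fun hne => hmax c (hC.1 hc) ⟨h, hne⟩
      exact List.prefix_rfl
  ext y
  exact ⟨fun hy => ⟨hC.1 hy, hle y hy⟩, fun ⟨hy, hyx⟩ => hC.mem_of_forall_comparable hy
    fun c hc => List.prefix_or_prefix_of_prefix hyx (hle c hc)⟩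

theorem setOf_prefix_eq_insert (hx : x ∈ S) :
    {y ∈ S | y <+: x} = insert x {y ∈ S | PLt y x} := by
  ext y
  constructor
  · rintro ⟨hy, hyx⟩
    rcases eq_or_ne y x with rfl | hne
    exacts [Set.mem_insert y _, Set.mem_insert_of_mem x ⟨hy, hyx, hne⟩]
  · rintro (rfl | ⟨hy, hyx⟩)
    exacts [⟨hx, List.prefix_rfl⟩, ⟨hy, hyx.1⟩]

end Chain

def twoLevelTree (r : List β) (v : β → List β) (w : β → β → List β) : Set (List β) :=
  insert r (Set.range v ∪ Set.range (Function.uncurry w))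

namespace twoLevelTree

variable {T C : Set (List β)} {r y : List β} {ℓ₁ ℓ₂ : ℕ} {v : β → List β}
  {w : β → β → List β} {p q : β}

theorem mem_iff : y ∈ twoLevelTree r v w ↔ y = r ∨ (∃ p, v p = y) ∨ ∃ p q, w p q = y := by
  simp [twoLevelTree]

theorem root_mem : r ∈ twoLevelTree r v w := mem_iff.2 (Or.inl rfl)

theorem v_mem : v p ∈ twoLevelTree r v w := mem_iff.2 (Or.inr (Or.inl ⟨p, rfl⟩))

theorem w_mem : w p q ∈ twoLevelTree r v w := mem_iff.2 (Or.inr (Or.inr ⟨p, q, rfl⟩))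

variable (hr : r ∈ T) (hv : ∀ p, IsNodeAt T ℓ₁ r p (v p))
  (hw : ∀ p q, IsNodeAt T ℓ₂ (v p) q (w p q))
include hv

theorem plt_root_v (p : β) : PLt r (v p) := plt_of_append_singleton_prefix (hv p).2.1

theorem v_eq_of_prefix {p p' : β} (h : v p <+: v p') : v p = v p' :=
  eq_of_prefix_of_lvl_eq (hv p).1 h (by rw [(hv p).2.2, (hv p').2.2])

include hr in
theorem lvl_root_lt (p : β) : lvl T r < ℓ₁ := by
  simpa only [(hv p).2.2] using lvl_lt_lvl_of_plt hr (plt_root_v hv p)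

include hw

omit hv in
theorem plt_v_w (p q : β) : PLt (v p) (w p q) := plt_of_append_singleton_prefix (hw p q).2.1

theorem lvl_lt_lvl (p q : β) : ℓ₁ < ℓ₂ := by
  simpa only [(hv p).2.2, (hw p q).2.2] using lvl_lt_lvl_of_plt (hv p).1 (plt_v_w hw p q)

theorem plt_root_w (p q : β) : PLt r (w p q) := (plt_root_v hv p).trans (plt_v_w hw p q)

theorem root_prefix (hy : y ∈ twoLevelTree r v w) : r <+: y := by
  rcases mem_iff.1 hy with rfl | ⟨p, rfl⟩ | ⟨p, q, rfl⟩
  exacts [List.prefix_rfl, (plt_root_v hv p).1, (plt_root_w hv hw p q).1]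

include hr in
theorem subset : twoLevelTree r v w ⊆ T := by
  intro y hy
  rcases mem_iff.1 hy with rfl | ⟨p, rfl⟩ | ⟨p, q, rfl⟩
  exacts [hr, (hv p).1, (hw p q).1]

theorem setOf_plt_root : {y ∈ twoLevelTree r v w | PLt y r} = ∅ :=
  Set.eq_empty_of_forall_notMem fun y ⟨hy, hyr⟩ =>
    PLt.irrefl y (hyr.trans_prefix (root_prefix hv hw hy))

theorem setOf_plt_v : {y ∈ twoLevelTree r v w | PLt y (v p)} = {r} := by
  ext y
  refine ⟨fun ⟨hy, hyv⟩ => ?_, ?_⟩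
  · rcases mem_iff.1 hy with rfl | ⟨p', rfl⟩ | ⟨p', q', rfl⟩
    · rfl
    · have hlt := lvl_lt_lvl_of_plt (hv p').1 hyv
      rw [(hv p').2.2, (hv p).2.2] at hlt
      exact absurd hlt (lt_irrefl _)
    · have hlt := lvl_lt_lvl_of_plt (hw p' q').1 hyv
      rw [(hw p' q').2.2, (hv p).2.2] at hlt
      exact absurd hlt (lvl_lt_lvl hv hw p' q').not_gt
  · rintro rfl
    exact ⟨root_mem, plt_root_v hv p⟩

theorem setOf_plt_w : {y ∈ twoLevelTree r v w | PLt y (w p q)} = {r, v p} := by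
  ext y
  refine ⟨fun ⟨hy, hyw⟩ => ?_, ?_⟩
  · rcases mem_iff.1 hy with rfl | ⟨p', rfl⟩ | ⟨p', q', rfl⟩
    · exact Or.inl rfl
    · rw [eq_of_append_singleton_prefix ((hv p').2.1.trans hyw.1)
        ((hv p).2.1.trans (plt_v_w hw p q).1)]
      exact Or.inr rfl
    · have hlt := lvl_lt_lvl_of_plt (hw p' q').1 hyw
      rw [(hw p' q').2.2, (hw p q).2.2] at hlt
      exact absurd hlt (lt_irrefl _)
  · rintro (rfl | rfl)
    exacts [⟨root_mem, plt_root_w hv hw p q⟩, ⟨v_mem, plt_v_w hw p q⟩]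

theorem lvl_root : lvl (twoLevelTree r v w) r = 0 := by
  rw [lvl, setOf_plt_root hv hw, Set.ncard_empty]

theorem lvl_v : lvl (twoLevelTree r v w) (v p) = 1 := by
  rw [lvl, setOf_plt_v hv hw, Set.ncard_singleton]

theorem lvl_w : lvl (twoLevelTree r v w) (w p q) = 2 := by
  rw [lvl, setOf_plt_w hv hw, Set.ncard_pair (plt_root_v hv p).2]

theorem immSuc_root_iff : ImmSuc (twoLevelTree r v w) r y ↔ ∃ p, y = v p := by
  constructor
  · rintro ⟨-, hy, hry, hno⟩
    rcases mem_iff.1 hy with rfl | ⟨p, rfl⟩ | ⟨p, q, rfl⟩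
    · exact absurd hry (PLt.irrefl _)
    · exact ⟨p, rfl⟩
    · exact absurd ⟨v p, v_mem, plt_root_v hv p, plt_v_w hw p q⟩ hno
  · rintro ⟨p, rfl⟩
    refine ⟨root_mem, v_mem, plt_root_v hv p, fun ⟨u, hu, hru, huv⟩ => ?_⟩
    obtain rfl : u = r := (setOf_plt_v hv hw).subset ⟨hu, huv⟩
    exact PLt.irrefl u hru

theorem immSuc_v_iff : ImmSuc (twoLevelTree r v w) (v p) y ↔ ∃ q, y = w p q := by
  constructor
  · rintro ⟨-, hy, hvy, -⟩
    rcases mem_iff.1 hy with rfl | ⟨p', rfl⟩ | ⟨p', q', rfl⟩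
    · exact absurd hvy (PLt.irrefl _ <| ·.trans (plt_root_v hv p))
    · obtain rfl : v p = r := (setOf_plt_v hv hw).subset ⟨v_mem, hvy⟩
      exact absurd (plt_root_v hv p) (PLt.irrefl _)
    · rcases (setOf_plt_w hv hw).subset ⟨v_mem, hvy⟩ with h | h
      · exact absurd (h ▸ plt_root_v hv p) (PLt.irrefl _)
      · rw [eq_of_append_singleton_prefix (hv p).2.1 (h ▸ (hv p').2.1)]
        exact ⟨q', rfl⟩
  · rintro ⟨q, rfl⟩
    refine ⟨v_mem, w_mem, plt_v_w hw p q, fun ⟨u, hu, hvu, huw⟩ => ?_⟩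
    rcases (setOf_plt_w hv hw).subset ⟨hu, huw⟩ with rfl | rfl
    exacts [PLt.irrefl _ (hvu.trans_prefix (plt_root_v hv p).1), PLt.irrefl _ hvu]

include hr in
theorem not_plt_w (hy : y ∈ twoLevelTree r v w) : ¬PLt (w p q) y := by
  intro h
  have hlt := lvl_lt_lvl_of_plt (hw p q).1 h
  have h₁ := lvl_root_lt hr hv p
  have h₂ := lvl_lt_lvl hv hw p q
  rw [(hw p q).2.2] at hlt
  rcases mem_iff.1 hy with rfl | ⟨p', rfl⟩ | ⟨p', q', rfl⟩
  · omega
  · rw [(hv p').2.2] at hlt; omega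
  · rw [(hw p' q').2.2] at hlt; omega

theorem levelsAligned : LevelsAligned T (twoLevelTree r v w) := by
  intro x hx y hy hxy
  rcases mem_iff.1 hx with rfl | ⟨p, rfl⟩ | ⟨p, q, rfl⟩ <;>
    rcases mem_iff.1 hy with rfl | ⟨p', rfl⟩ | ⟨p', q', rfl⟩ <;>
    simp only [lvl_root hv hw, lvl_v hv hw, lvl_w hv hw] at hxy <;>
    first
    | omega
    | rw [(hv p).2.2, (hv p').2.2]
    | rw [(hw p q).2.2, (hw p' q').2.2]

include hr in
theorem succCond (hT : IsStrongSubtreeInf Set.univ T) : SuccCond T (twoLevelTree r v w) := by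
  intro x hx hnonmax t ht
  rcases mem_iff.1 hx with rfl | ⟨p, rfl⟩ | ⟨p, q, rfl⟩
  · exact existsUnique_immSuc_prefix_of_dir hT hr (fun p => ⟨(hv p).1, (hv p).2.1⟩)
      (fun _ => immSuc_root_iff hv hw) ht
  · exact existsUnique_immSuc_prefix_of_dir hT (hv p).1 (fun q => ⟨(hw p q).1, (hw p q).2.1⟩)
      (fun _ => immSuc_v_iff hv hw) ht
  · obtain ⟨y, hy, hwy⟩ := hnonmax
    exact absurd hwy (not_plt_w hr hv hw hy)

/-- A grandchild `w p _` above the top of a chain missing the last level would extend it. -/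
theorem exists_w_mem [Nonempty β] (hC : MaxChainIn (twoLevelTree r v w) C) :
    ∃ p q, w p q ∈ C := by
  by_contra! hnoW
  obtain ⟨p, hp⟩ : ∃ p, ∀ p', v p' ∈ C → v p' <+: v p := by
    by_cases hvC : ∃ p, v p ∈ C
    · obtain ⟨p, hpC⟩ := hvC
      refine ⟨p, fun p' hp'C => ?_⟩
      rcases hC.2.1 _ hp'C _ hpC with h | h
      exacts [h, (v_eq_of_prefix hv h).symm ▸ List.prefix_rfl]
    · push Not at hvC
      exact ⟨Classical.arbitrary β, fun p' hp'C => absurd hp'C (hvC p')⟩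
  refine hnoW p (Classical.arbitrary β) (hC.mem_of_forall_comparable w_mem fun c hc => Or.inr ?_)
  rcases mem_iff.1 (hC.1 hc) with rfl | ⟨p', rfl⟩ | ⟨p', q', rfl⟩
  · exact (plt_root_w hv hw _ _).1
  · exact (hp p' hc).trans (plt_v_w hw _ _).1
  · exact absurd hc (hnoW p' q')

include hr in
theorem balancedOfHeight [Nonempty β] : BalancedOfHeight (twoLevelTree r v w) 3 := by
  intro C hC
  obtain ⟨p, q, hpq⟩ := exists_w_mem hv hw hC
  rw [hC.eq_setOf_prefix hpq fun _ => not_plt_w hr hv hw, setOf_prefix_eq_insert w_mem,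
    setOf_plt_w hv hw]
  exact ⟨Set.toFinite _, Set.ncard_eq_three.2 ⟨_, _, _, (plt_root_w hv hw p q).2.symm,
    (plt_v_w hw p q).2.symm, (plt_root_v hv p).2, rfl⟩⟩

include hr in
theorem isStrongSubtreeFin [Nonempty β] (hT : IsStrongSubtreeInf Set.univ T) :
    IsStrongSubtreeFin T (twoLevelTree r v w) 3 :=
  ⟨subset hr hv hw, ⟨r, root_mem⟩, ⟨r, root_mem, fun _ => root_prefix hv hw⟩,
    balancedOfHeight hr hv hw, levelsAligned hv hw, succCond hr hv hw hT⟩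

theorem isRoot : IsRoot (twoLevelTree r v w) r := ⟨root_mem, fun _ => root_prefix hv hw⟩

theorem dirSucc_root_v (p : β) : DirSucc (twoLevelTree r v w) r p (v p) :=
  ⟨(immSuc_root_iff hv hw).2 ⟨p, rfl⟩, (hv p).2.1⟩

theorem dirSucc_v_w (p q : β) : DirSucc (twoLevelTree r v w) (v p) q (w p q) :=
  ⟨(immSuc_v_iff hv hw).2 ⟨q, rfl⟩, (hw p q).2.1⟩

end twoLevelTree

section Classes

variable {T : Set (List β)} {ℓ : ℕ} {u x : List β} {p₀ : β}

theorem isNodeAt_update [DecidableEq β] {f : β → List β} (hf : ∀ p, IsNodeAt T ℓ u p (f p))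
    (hx : IsNodeAt T ℓ u p₀ x) (p : β) : IsNodeAt T ℓ u p (Function.update f p₀ x p) :=
  (Function.forall_update_iff f fun p y => IsNodeAt T ℓ u p y).2 ⟨hx, fun p _ => hf p⟩ p

variable (hT : IsStrongSubtreeInf Set.univ T)
include hT

theorem exists_isNodeAt_grandchildren {r : List β} {ℓ₁ ℓ₂ : ℕ} {v : β → List β}
    (hv : ∀ p, IsNodeAt T ℓ₁ r p (v p)) (h : ℓ₁ < ℓ₂) :
    ∃ w : β → β → List β, ∀ p q, IsNodeAt T ℓ₂ (v p) q (w p q) := by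
  choose w hw using fun p => exists_isNodeAt hT (hv p).1 ((hv p).2.2 ▸ h)
  exact ⟨w, hw⟩

theorem exists_height_three_of_plt {s t : List β} (hs : s ∈ T) (ht : t ∈ T) (h : PLt s t) :
    ∃ S p, IsStrongSubtreeFin T S 3 ∧ IsRoot S s ∧ DirSucc S s p t := by
  classical
  obtain ⟨p₀, hp₀⟩ := h.exists_append_singleton_prefix
  have : Nonempty β := ⟨p₀⟩
  choose v hv using exists_isNodeAt hT hs (lvl_lt_lvl_of_plt hs h)
  have hv' := isNodeAt_update hv ⟨ht, hp₀, rfl⟩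
  obtain ⟨w, hw⟩ := exists_isNodeAt_grandchildren hT hv' (lvl T t).lt_add_one
  refine ⟨_, p₀, twoLevelTree.isStrongSubtreeFin hs hv' hw hT, twoLevelTree.isRoot hv' hw, ?_⟩
  simpa using twoLevelTree.dirSucc_root_v hv' hw p₀

theorem exists_height_three_of_lvl_eq {r s t : List β} {ps pt : β} (hr : r ∈ T) (hs : s ∈ T)
    (ht : t ∈ T) (hps : r ++ [ps] <+: s) (hpt : r ++ [pt] <+: t) (hne : ps ≠ pt)
    (hl : lvl T s = lvl T t) :
    ∃ S, IsStrongSubtreeFin T S 3 ∧ IsRoot S r ∧ DirSucc S r ps s ∧ DirSucc S r pt t := by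
  classical
  have : Nonempty β := ⟨ps⟩
  choose v hv using exists_isNodeAt hT hr (lvl_lt_lvl_of_plt hr (plt_of_append_singleton_prefix hps))
  have hv' := isNodeAt_update (isNodeAt_update hv ⟨hs, hps, rfl⟩) ⟨ht, hpt, hl.symm⟩
  obtain ⟨w, hw⟩ := exists_isNodeAt_grandchildren hT hv' (lvl T s).lt_add_one
  refine ⟨_, twoLevelTree.isStrongSubtreeFin hr hv' hw hT, twoLevelTree.isRoot hv' hw, ?_, ?_⟩
  · simpa [hne] using twoLevelTree.dirSucc_root_v hv' hw ps
  · simpa using twoLevelTree.dirSucc_root_v hv' hw pt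

theorem exists_height_three_of_lvl_lt {r s t : List β} {ps pt : β} (hr : r ∈ T) (hs : s ∈ T)
    (ht : t ∈ T) (hps : r ++ [ps] <+: s) (hpt : r ++ [pt] <+: t) (hne : ps ≠ pt)
    (hl : lvl T s < lvl T t) :
    ∃ S x rr, IsStrongSubtreeFin T S 3 ∧ IsRoot S r ∧ DirSucc S r ps s ∧
      DirSucc S r pt x ∧ DirSucc S x rr t := by
  classical
  have : Nonempty β := ⟨ps⟩
  have hrs := lvl_lt_lvl_of_plt hr (plt_of_append_singleton_prefix hps)
  obtain ⟨x, hx, hrx, hxt, hxl⟩ := exists_prefix_lvl_eq hr ht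
    (plt_of_append_singleton_prefix hpt).1 hrs.le hl.le
  have hptx := append_singleton_prefix_of_prefix hpt hxt ⟨hrx, by rintro rfl; omega⟩
  obtain ⟨rr, hrr⟩ := (show PLt x t from ⟨hxt, by rintro rfl; omega⟩).exists_append_singleton_prefix
  choose v hv using exists_isNodeAt hT hr hrs
  set v' := Function.update (Function.update v ps s) pt x
  have hv' : ∀ p, IsNodeAt T (lvl T s) r p (v' p) :=
    isNodeAt_update (isNodeAt_update hv ⟨hs, hps, rfl⟩) ⟨hx, hptx, hxl⟩
  obtain ⟨w, hw⟩ := exists_isNodeAt_grandchildren hT hv' hl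
  have hw' (p q : β) : IsNodeAt T (lvl T t) (v' p) q
      (Function.update w pt (Function.update (w pt) rr t) p q) := by
    rcases eq_or_ne p pt with rfl | hp
    · simpa using isNodeAt_update (hw p) (by simpa [v'] using ⟨ht, hrr, rfl⟩) q
    · simpa [hp] using hw p q
  refine ⟨_, x, rr, twoLevelTree.isStrongSubtreeFin hr hv' hw' hT, twoLevelTree.isRoot hv' hw',
    ?_, ?_, ?_⟩
  · simpa [v', hne] using twoLevelTree.dirSucc_root_v hv' hw' ps
  · simpa [v'] using twoLevelTree.dirSucc_root_v hv' hw' pt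
  · simpa [v'] using twoLevelTree.dirSucc_v_w hv' hw' pt rr

end Classes

theorem stmt17_general (b : ℕ)
    (T : Set (List (Fin b))) (hT : IsStrongSubtreeInf Set.univ T)
    (s t : List (Fin b)) (hs : s ∈ T) (ht : t ∈ T) (hst : s ≠ t) :
    (∃ (S : Set (List (Fin b))) (r v : List (Fin b)) (p : Fin b),
        IsStrongSubtreeFin T S 3 ∧ IsRoot S r ∧ DirSucc S r p v ∧
        ({s, t} : Set (List (Fin b))) = {r, v}) ∨
    (∃ (S : Set (List (Fin b))) (r vp vq : List (Fin b)) (p q : Fin b),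
        IsStrongSubtreeFin T S 3 ∧ IsRoot S r ∧ p ≠ q ∧
        DirSucc S r p vp ∧ DirSucc S r q vq ∧
        ({s, t} : Set (List (Fin b))) = {vp, vq}) ∨
    (∃ (S : Set (List (Fin b))) (r vp vq w : List (Fin b)) (p q rr : Fin b),
        IsStrongSubtreeFin T S 3 ∧ IsRoot S r ∧ p ≠ q ∧
        DirSucc S r p vp ∧ DirSucc S r q vq ∧ DirSucc S vq rr w ∧
        ({s, t} : Set (List (Fin b))) = {vp, w}) := by
  by_cases hst' : s <+: t
  · obtain ⟨S, p, hS, hroot, hdir⟩ := exists_height_three_of_plt hT hs ht ⟨hst', hst⟩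
    exact Or.inl ⟨S, s, t, p, hS, hroot, hdir, rfl⟩
  by_cases hts : t <+: s
  · obtain ⟨S, p, hS, hroot, hdir⟩ := exists_height_three_of_plt hT ht hs ⟨hts, hst.symm⟩
    exact Or.inl ⟨S, t, s, p, hS, hroot, hdir, Set.pair_comm s t⟩
  obtain ⟨r, hr, ps, pt, hne, hps, hpt⟩ := exists_meet hT hs ht hst' hts
  rcases lt_trichotomy (lvl T s) (lvl T t) with hlt | heq | hgt
  · obtain ⟨S, x, rr, hS, hroot, hs', hx, ht'⟩ :=
      exists_height_three_of_lvl_lt hT hr hs ht hps hpt hne hlt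
    exact Or.inr (Or.inr ⟨S, r, s, x, t, ps, pt, rr, hS, hroot, hne, hs', hx, ht', rfl⟩)
  · obtain ⟨S, hS, hroot, hs', ht'⟩ := exists_height_three_of_lvl_eq hT hr hs ht hps hpt hne heq
    exact Or.inr (Or.inl ⟨S, r, s, t, ps, pt, hS, hroot, hne, hs', ht', rfl⟩)
  · obtain ⟨S, x, rr, hS, hroot, ht', hx, hs'⟩ :=
      exists_height_three_of_lvl_lt hT hr ht hs hpt hps hne.symm hgt
    exact Or.inr (Or.inr ⟨S, r, t, x, s, pt, ps, rr, hS, hroot, hne.symm, ht', hx, hs',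
      Set.pair_comm s t⟩)

theorem stmt17 (b : ℕ) (hb : 2 ≤ b)
    (T : Set (List (Fin b))) (hT : IsStrongSubtreeInf Set.univ T)
    (s t : List (Fin b)) (hs : s ∈ T) (ht : t ∈ T) (hst : s ≠ t) :
    (∃ (S : Set (List (Fin b))) (r v : List (Fin b)) (p : Fin b),
        IsStrongSubtreeFin T S 3 ∧ IsRoot S r ∧ DirSucc S r p v ∧
        ({s, t} : Set (List (Fin b))) = {r, v}) ∨
    (∃ (S : Set (List (Fin b))) (r vp vq : List (Fin b)) (p q : Fin b),
        IsStrongSubtreeFin T S 3 ∧ IsRoot S r ∧ p ≠ q ∧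
        DirSucc S r p vp ∧ DirSucc S r q vq ∧
        ({s, t} : Set (List (Fin b))) = {vp, vq}) ∨
    (∃ (S : Set (List (Fin b))) (r vp vq w : List (Fin b)) (p q rr : Fin b),
        IsStrongSubtreeFin T S 3 ∧ IsRoot S r ∧ p ≠ q ∧
        DirSucc S r p vp ∧ DirSucc S r q vq ∧ DirSucc S vq rr w ∧
        ({s, t} : Set (List (Fin b))) = {vp, w}) :=
  stmt17_general b T hT s t hs ht hst
end
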